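/- arXiv:2510.00752 — 3 statements merged into one kernel-verified Lean document; each statement's English description precedes it below -/
import Mathlib

section
/- Let α ∈ (0,1) be a constant, let ρ and σ be density matrices of the same size, each of rank at most r, let δ₁, ε₂ ∈ (0,1), and let p₂ be a real polynomial with |p₂(x)| ≤ 1 for all x ∈ [−1,1] and |p₂(x) − (1/2)x^{1−α}| ≤ ε₂ for all x ∈ [0,1]. Then |δ₁^{1−α}·tr((ρ/2)^α·p₂(σ/2)) − (δ₁^{1−α}/4)·tr(ρ^α·σ^{1−α})| ≤ (δ₁^{1−α}/2^α)·r^{1−α}·ε₂. -/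
open Matrix Polynomial
open scoped ComplexOrder

/-- The matrix power `A^β` of a Hermitian matrix, via the spectral decomposition:
apply `t ↦ t^β` to the eigenvalues, with the convention `0^β = 0`.
(Junk value `0` if `A` is not Hermitian.) -/
noncomputable def matPow {n : Type*} [Fintype n] [DecidableEq n]
    (A : Matrix n n ℂ) (β : ℝ) : Matrix n n ℂ :=
  if hA : A.IsHermitian then hA.cfc (fun x => if x = 0 then 0 else x ^ β) else 0

/-!
With `B = σ/2` and `g(x) = p₂(x) - x^{1-α}/2`, the functional calculus splits
`p₂(B) = g(B) + B^{1-α}/2`, and `(ρ/2)^α (σ/2)^{1-α} = ρ^α σ^{1-α}/2`, so the quantity to bound is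
`δ₁^{1-α} tr((ρ/2)^α g(B))`. The eigenvalues of `B` lie in `[0, 1/2]`, where `|g| ≤ ε₂`, and pairing
the positive semidefinite `(ρ/2)^α` with `g(B)` costs at most `ε₂ tr (ρ/2)^α`. Finally, by Jensen's
inequality for the concave `t ↦ t^α` over the at most `r` nonzero eigenvalues of `ρ`,
`tr ρ^α ≤ r^{1-α}`.
-/

open Finset in
theorem Real.sum_rpow_le_card_rpow_mul_sum_rpow {ι : Type*} (s : Finset ι) {f : ι → ℝ}
    (hf : ∀ i ∈ s, 0 ≤ f i) {α : ℝ} (hα₀ : 0 ≤ α) (hα₁ : α ≤ 1) :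
    ∑ i ∈ s, f i ^ α ≤ (#s : ℝ) ^ (1 - α) * (∑ i ∈ s, f i) ^ α := by
  rcases s.eq_empty_or_nonempty with rfl | hs
  · simp only [sum_empty]; positivity
  have hk : (0 : ℝ) < #s := by exact_mod_cast hs.card_pos
  have jensen := (Real.concaveOn_rpow hα₀ hα₁).le_map_sum (t := s) (w := fun _ => (#s : ℝ)⁻¹)
    (p := f) (fun _ _ => by positivity) (by simp [hk.ne']) hf
  simp only [smul_eq_mul, ← mul_sum] at jensen
  rw [Real.mul_rpow (by positivity) (sum_nonneg hf), Real.inv_rpow hk.le,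
    inv_mul_le_iff₀ hk, ← mul_assoc, ← div_eq_mul_inv] at jensen
  rwa [Real.rpow_sub hk, Real.rpow_one]

section MatPow

variable {n : Type*} [Fintype n] [DecidableEq n]

theorem Matrix.IsHermitian.trace_mul_cfc {A : Matrix n n ℂ} (hA : A.IsHermitian)
    (M : Matrix n n ℂ) (f : ℝ → ℝ) :
    (M * cfc f A).trace = ∑ i, (star (hA.eigenvectorUnitary : Matrix n n ℂ) * M
      * hA.eigenvectorUnitary) i i * (f (hA.eigenvalues i) : ℂ) := by
  rw [hA.cfc_eq, IsHermitian.cfc, Unitary.conjStarAlgAut_apply, ← Matrix.mul_assoc,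
    ← Matrix.mul_assoc, trace_mul_cycle, ← Matrix.mul_assoc, Matrix.trace]
  simp [Matrix.mul_diagonal]

theorem Matrix.IsHermitian.trace_cfc {A : Matrix n n ℂ} (hA : A.IsHermitian) (f : ℝ → ℝ) :
    (cfc f A).trace = ∑ i, (f (hA.eigenvalues i) : ℂ) := by
  simpa using hA.trace_mul_cfc 1 f

theorem Matrix.PosSemidef.spectrum_subset_Icc_trace {A : Matrix n n ℂ} (hA : A.PosSemidef) :
    spectrum ℝ A ⊆ Set.Icc 0 A.trace.re := by
  rw [hA.1.spectrum_real_eq_range_eigenvalues]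
  rintro - ⟨i, rfl⟩
  refine ⟨hA.eigenvalues_nonneg i, ?_⟩
  have hsum : A.trace.re = ∑ j, hA.1.eigenvalues j := by
    simp [hA.1.trace_eq_sum_eigenvalues]
  rw [hsum]
  exact Finset.single_le_sum (fun j _ => hA.eigenvalues_nonneg j) (Finset.mem_univ i)

theorem Matrix.PosSemidef.norm_trace_mul_cfc_le {P A : Matrix n n ℂ} (hP : P.PosSemidef)
    (hA : A.IsHermitian) {f : ℝ → ℝ} {ε : ℝ} (hf : ∀ x ∈ spectrum ℝ A, |f x| ≤ ε) :
    ‖(P * cfc f A).trace‖ ≤ ε * P.trace.re := by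
  -- in an eigenbasis of `A` the trace is `∑ Qᵢᵢ f(λᵢ)`, and `Q` has nonnegative diagonal summing to `tr P`
  set U : Matrix n n ℂ := (hA.eigenvectorUnitary : Matrix n n ℂ)
  set Q := star U * P * U
  have hQ : Q.PosSemidef := by
    simpa [Q, Matrix.star_eq_conjTranspose] using hP.conjTranspose_mul_mul_same U
  have hQtr : Q.trace = P.trace := by
    rw [trace_mul_cycle, Unitary.mul_star_self_of_mem (SetLike.coe_mem _), one_mul]
  have hfε : ∀ i, |f (hA.eigenvalues i)| ≤ ε := fun i =>
    hf _ (hA.eigenvalues_mem_spectrum_real i)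
  have hQdiag : ∀ i, ‖Q i i‖ = (Q i i).re := fun i => by
    simpa using congrArg Complex.re (Complex.norm_of_nonneg' (hQ.diag_nonneg (i := i)))
  rw [hA.trace_mul_cfc, ← hQtr, trace, Complex.re_sum, Finset.mul_sum]
  refine (norm_sum_le _ _).trans (Finset.sum_le_sum fun i _ => ?_)
  rw [norm_mul, Complex.norm_real, Real.norm_eq_abs, hQdiag, mul_comm ε]
  exact mul_le_mul_of_nonneg_left (hfε i) ((norm_nonneg _).trans_eq (hQdiag i))

theorem matPow_eq_cfc_ite {A : Matrix n n ℂ} (hA : A.IsHermitian) (β : ℝ) :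
    matPow A β = cfc (fun x : ℝ => if x = 0 then 0 else x ^ β) A := by
  rw [matPow, dif_pos hA, hA.cfc_eq]

theorem matPow_eq_cfc {A : Matrix n n ℂ} (hA : A.IsHermitian) {β : ℝ} (hβ : β ≠ 0) :
    matPow A β = cfc (fun x : ℝ => x ^ β) A := by
  rw [matPow_eq_cfc_ite hA]
  refine cfc_congr fun x _ => ?_
  split_ifs with hx
  · rw [hx, Real.zero_rpow hβ]
  · rfl

theorem cfc_eval_sub_mul_rpow {A : Matrix n n ℂ} (hA : A.IsHermitian) (p : ℝ[X]) (c : ℝ)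
    {β : ℝ} (hβ : β ≠ 0) :
    cfc (fun x => p.eval x - c * x ^ β) A = aeval A p - c • matPow A β := by
  rw [cfc_sub _ _ A (finite_real_spectrum.continuousOn _) (finite_real_spectrum.continuousOn _),
    cfc_const_mul _ _ A (finite_real_spectrum.continuousOn _), matPow_eq_cfc hA hβ]
  congr 1
  exact cfc_polynomial p A hA

open scoped MatrixOrder in
theorem posSemidef_matPow {A : Matrix n n ℂ} (hA : A.PosSemidef) (β : ℝ) :
    (matPow A β).PosSemidef := by
  rw [matPow_eq_cfc_ite hA.1, ← nonneg_iff_posSemidef]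
  refine cfc_nonneg fun x hx => ?_
  split_ifs
  · rfl
  · exact Real.rpow_nonneg (hA.spectrum_subset_Icc_trace hx).1 β

theorem matPow_smul {A : Matrix n n ℂ} (hA : A.PosSemidef) {β c : ℝ} (hβ : β ≠ 0) (hc : 0 ≤ c) :
    matPow (c • A) β = c ^ β • matPow A β := by
  have hcomp : cfc (fun x : ℝ => x ^ β) (c • A) = cfc (fun x : ℝ => (c * x) ^ β) A :=
    (cfc_comp_smul c _ A ((finite_real_spectrum.image _).continuousOn _) hA.1).symm
  rw [matPow_eq_cfc (hA.smul hc).1 hβ, matPow_eq_cfc hA.1 hβ, hcomp,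
    ← cfc_const_mul _ _ _ (finite_real_spectrum.continuousOn _)]
  exact cfc_congr fun x hx => Real.mul_rpow hc (hA.spectrum_subset_Icc_trace hx).1

theorem matPow_smul_mul_matPow_smul {A B : Matrix n n ℂ} (hA : A.PosSemidef) (hB : B.PosSemidef)
    {β c : ℝ} (hβ₀ : β ≠ 0) (hβ₁ : β ≠ 1) (hc : 0 ≤ c) :
    matPow (c • A) β * matPow (c • B) (1 - β) = c • (matPow A β * matPow B (1 - β)) := by
  rw [matPow_smul hA hβ₀ hc, matPow_smul hB (sub_ne_zero.2 hβ₁.symm) hc, smul_mul_smul,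
    ← Real.rpow_add' hc (by simp), add_sub_cancel, Real.rpow_one]

theorem Matrix.PosSemidef.re_trace_matPow_le {A : Matrix n n ℂ} (hA : A.PosSemidef) {α : ℝ}
    (hα₀ : 0 < α) (hα₁ : α ≤ 1) :
    (matPow A α).trace.re ≤ (A.rank : ℝ) ^ (1 - α) * A.trace.re ^ α := by
  classical
  set s := Finset.univ.filter fun i => hA.1.eigenvalues i ≠ 0
  have hrank : (A.rank : ℝ) = s.card := by
    rw [hA.1.rank_eq_card_non_zero_eigs, Fintype.card_subtype]
  have htrace : A.trace.re = ∑ i ∈ s, hA.1.eigenvalues i := by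
    simp [s, hA.1.trace_eq_sum_eigenvalues, Finset.sum_filter_ne_zero]
  have htrace_pow : (matPow A α).trace.re = ∑ i ∈ s, hA.1.eigenvalues i ^ α := by
    rw [matPow_eq_cfc hA.1 hα₀.ne', hA.1.trace_cfc, Complex.re_sum]
    simp only [Complex.ofReal_re]
    refine (Finset.sum_filter_of_ne ?_).symm
    intro i _ h hi
    rw [hi, Real.zero_rpow hα₀.ne'] at h
    exact h rfl
  rw [hrank, htrace, htrace_pow]
  exact Real.sum_rpow_le_card_rpow_mul_sum_rpow s (fun i _ => hA.eigenvalues_nonneg i)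
    hα₀.le hα₁

theorem Matrix.PosSemidef.re_trace_matPow_le_of_trace_eq_one {A : Matrix n n ℂ}
    (hA : A.PosSemidef) (hA₁ : A.trace = 1) {r : ℕ} (hr : A.rank ≤ r) {α : ℝ} (hα₀ : 0 < α)
    (hα₁ : α ≤ 1) : (matPow A α).trace.re ≤ (r : ℝ) ^ (1 - α) := by
  have h := hA.re_trace_matPow_le hα₀ hα₁
  rw [hA₁, Complex.one_re, Real.one_rpow, mul_one] at h
  exact h.trans (Real.rpow_le_rpow (Nat.cast_nonneg _) (mod_cast hr) (by linarith))

end MatPow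

theorem abs_trace_pow_half_poly_sub_trace_pow_pow_le_general
    {n : Type*} [Fintype n] [DecidableEq n] (r : ℕ)
    (α δ₁ ε₂ : ℝ) (hα : α ∈ Set.Ioo (0 : ℝ) 1)
    (hδ₁ : δ₁ ∈ Set.Ioo (0 : ℝ) 1)
    (ρ σ : Matrix n n ℂ)
    (hρ : ρ.PosSemidef) (hρ1 : ρ.trace = 1) (hρr : ρ.rank ≤ r)
    (hσ : σ.PosSemidef) (hσ1 : σ.trace = 1)
    (p₂ : Polynomial ℝ)
    (hp₂approx : ∀ x ∈ Set.Icc (0 : ℝ) 1, |p₂.eval x - (1 / 2) * x ^ (1 - α)| ≤ ε₂) :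
    ‖(((δ₁ ^ (1 - α) : ℝ) : ℂ)
          * (matPow ((1 / 2 : ℝ) • ρ) α * Polynomial.aeval ((1 / 2 : ℝ) • σ) p₂).trace
        - ((δ₁ ^ (1 - α) / 4 : ℝ) : ℂ) * (matPow ρ α * matPow σ (1 - α)).trace)‖
      ≤ δ₁ ^ (1 - α) / 2 ^ α * (r : ℝ) ^ (1 - α) * ε₂ := by
  obtain ⟨hα₀, hα₁⟩ := hα
  set B := (1 / 2 : ℝ) • σ
  set P := matPow ((1 / 2 : ℝ) • ρ) α
  set g : ℝ → ℝ := fun x => p₂.eval x - 1 / 2 * x ^ (1 - α)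
  have hB : B.PosSemidef := hσ.smul (by norm_num)
  have hdiff : ((δ₁ ^ (1 - α) : ℝ) : ℂ) * (P * aeval B p₂).trace
        - ((δ₁ ^ (1 - α) / 4 : ℝ) : ℂ) * (matPow ρ α * matPow σ (1 - α)).trace
      = ((δ₁ ^ (1 - α) : ℝ) : ℂ) * (P * cfc g B).trace := by
    rw [cfc_eval_sub_mul_rpow hB.1 p₂ _ (sub_ne_zero.2 hα₁.ne'), mul_sub, trace_sub,
      mul_smul_comm, trace_smul,
      matPow_smul_mul_matPow_smul hρ hσ hα₀.ne' hα₁.ne (by norm_num), trace_smul]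
    simp only [Complex.real_smul]
    push_cast
    ring
  have hg : ∀ x ∈ spectrum ℝ B, |g x| ≤ ε₂ := fun x hx => by
    have hxB := hB.spectrum_subset_Icc_trace hx
    rw [trace_smul, hσ1] at hxB
    exact hp₂approx x ⟨hxB.1, hxB.2.trans (by norm_num)⟩
  have hP : P = ((1 / 2 : ℝ) ^ α) • matPow ρ α := matPow_smul hρ hα₀.ne' (by norm_num)
  have hε₂ : 0 ≤ ε₂ := (abs_nonneg _).trans (hp₂approx 0 ⟨le_rfl, zero_le_one⟩)
  have hδ : 0 ≤ δ₁ ^ (1 - α) := Real.rpow_nonneg hδ₁.1.le _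
  rw [hdiff, norm_mul, Complex.norm_of_nonneg hδ]
  calc δ₁ ^ (1 - α) * ‖(P * cfc g B).trace‖
      ≤ δ₁ ^ (1 - α) * (ε₂ * P.trace.re) := by
        gcongr
        exact (posSemidef_matPow (hρ.smul (by norm_num)) α).norm_trace_mul_cfc_le hB.1 hg
    _ = δ₁ ^ (1 - α) / 2 ^ α * (matPow ρ α).trace.re * ε₂ := by
        rw [hP, trace_smul, Complex.smul_re, smul_eq_mul, Real.div_rpow zero_le_one zero_le_two,
          Real.one_rpow]
        ring
    _ ≤ δ₁ ^ (1 - α) / 2 ^ α * (r : ℝ) ^ (1 - α) * ε₂ := by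
        gcongr
        exact hρ.re_trace_matPow_le_of_trace_eq_one hρ1 hρr hα₀ hα₁.le

/-- `|δ₁^{1-α} tr((ρ/2)^α p₂(σ/2)) - (δ₁^{1-α}/4) tr(ρ^α σ^{1-α})|
      ≤ (δ₁^{1-α}/2^α) r^{1-α} ε₂`. -/
theorem abs_trace_pow_half_poly_sub_trace_pow_pow_le
    {n : Type*} [Fintype n] [DecidableEq n] (r : ℕ)
    (α δ₁ ε₂ : ℝ) (hα : α ∈ Set.Ioo (0 : ℝ) 1)
    (hδ₁ : δ₁ ∈ Set.Ioo (0 : ℝ) 1) (hε₂ : ε₂ ∈ Set.Ioo (0 : ℝ) 1)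
    (ρ σ : Matrix n n ℂ)
    (hρ : ρ.PosSemidef) (hρ1 : ρ.trace = 1) (hρr : ρ.rank ≤ r)
    (hσ : σ.PosSemidef) (hσ1 : σ.trace = 1) (hσr : σ.rank ≤ r)
    (p₂ : Polynomial ℝ)
    (hp₂bdd : ∀ x ∈ Set.Icc (-1 : ℝ) 1, |p₂.eval x| ≤ 1)
    (hp₂approx : ∀ x ∈ Set.Icc (0 : ℝ) 1, |p₂.eval x - (1 / 2) * x ^ (1 - α)| ≤ ε₂) :
    ‖(((δ₁ ^ (1 - α) : ℝ) : ℂ)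
          * (matPow ((1 / 2 : ℝ) • ρ) α * Polynomial.aeval ((1 / 2 : ℝ) • σ) p₂).trace
        - ((δ₁ ^ (1 - α) / 4 : ℝ) : ℂ) * (matPow ρ α * matPow σ (1 - α)).trace)‖
      ≤ δ₁ ^ (1 - α) / 2 ^ α * (r : ℝ) ^ (1 - α) * ε₂ :=
  abs_trace_pow_half_poly_sub_trace_pow_pow_le_general r α δ₁ ε₂ hα hδ₁ ρ σ hρ hρ1 hρr hσ hσ1 p₂
    hp₂approx
end

section
/- Let α ∈ (0,1), let d be an even positive integer, let ε ∈ (0, 1/2], let σ = I/d be the maximally mixed state on ℂ^d, and let ρ be a diagonal density matrix on ℂ^d with d/2 eigenvalues equal to (1−2ε)/d and d/2 eigenvalues equal to (1+2ε)/d. Then tr(ρ^α σ^{1−α}) = ((1+2ε)^α + (1−2ε)^α)/2 ≤ 1 − 2α(1−α)ε². -/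
open Matrix
open scoped ComplexOrder

/-! Since `σ` is scalar, `σ ^ (1 - α) = d ^ (α - 1) • 1`, and the trace of `ρ ^ α` is the sum of
the `α`-th powers of the eigenvalues of `ρ`, which are its diagonal entries; this gives the
identity. The inequality is `(1 + x) ^ α + (1 - x) ^ α ≤ 2 - α (1 - α) x²` at `x = 2ε`: the even
function `h t = (1 + t) ^ α + (1 - t) ^ α + α (1 - α) t²` is concave on `[-1, 1]`, since
`h'' t = α (1 - α) (2 - (1 + t) ^ (α - 2) - (1 - t) ^ (α - 2)) ≤ 0` by AM-GM, so
`h x = (h x + h (-x)) / 2 ≤ h 0 = 2`. -/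

open Real Set

namespace Matrix

variable {𝕜 n : Type*} [RCLike 𝕜] [Fintype n] [DecidableEq n]

lemma IsHermitian.trace_cfc_s14 {A : Matrix n n 𝕜} (hA : A.IsHermitian) (g : ℝ → ℝ) :
    (hA.cfc g).trace = ∑ i, (g (hA.eigenvalues i) : 𝕜) := by
  rw [IsHermitian.cfc, Unitary.conjStarAlgAut_apply, trace_mul_cycle,
    UnitaryGroup.star_mul_self, one_mul, trace_diagonal]
  rfl

lemma IsHermitian.map_eigenvalues_diagonal (v : n → ℝ)
    (h : (diagonal fun i ↦ (v i : 𝕜)).IsHermitian) :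
    Finset.univ.val.map h.eigenvalues = Finset.univ.val.map v := by
  apply Multiset.map_injective (RCLike.ofReal_injective (K := 𝕜))
  rw [Multiset.map_map, ← h.roots_charpoly_eq_eigenvalues, charpoly_diagonal]
  simp [Polynomial.roots_prod, Polynomial.X_sub_C_ne_zero, Finset.prod_ne_zero_iff]

end Matrix

section MatPow

variable {n : Type*} [Fintype n] [DecidableEq n]

lemma matPow_ofReal_smul_one {c : ℝ} (hc : c ≠ 0) (β : ℝ) :
    matPow ((c : ℂ) • (1 : Matrix n n ℂ)) β = ((c ^ β : ℝ) : ℂ) • 1 := by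
  have hA : ((c : ℂ) • (1 : Matrix n n ℂ)).IsHermitian := by simp [IsHermitian]
  have hc_alg : (c : ℂ) • (1 : Matrix n n ℂ) = algebraMap ℝ _ c := by
    rw [Algebra.algebraMap_eq_smul_one, ← Complex.coe_smul]
  rw [matPow, dif_pos hA, ← hA.cfc_eq, hc_alg, cfc_algebraMap, if_neg hc,
    Algebra.algebraMap_eq_smul_one, Complex.coe_smul]

lemma trace_matPow_diagonal (v : n → ℝ) (β : ℝ) :
    (matPow (diagonal fun i ↦ (v i : ℂ)) β).trace
      = (((Finset.univ.val.map v).map fun x ↦ if x = 0 then 0 else x ^ β).sum : ℝ) := by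
  have hA : (diagonal fun i ↦ (v i : ℂ)).IsHermitian := by
    simp [IsHermitian, diagonal_conjTranspose]
  rw [matPow, dif_pos hA, hA.trace_cfc_s14, ← hA.map_eigenvalues_diagonal, Multiset.map_map,
    ← RCLike.ofReal_sum]
  rfl

end MatPow

lemma inv_rpow_one_sub_mul_div_rpow {a d : ℝ} (ha : 0 ≤ a) (hd : 0 < d) (α : ℝ) :
    d⁻¹ ^ (1 - α) * (a / d) ^ α = a ^ α / d := by
  rw [div_rpow ha hd.le, inv_rpow hd.le, ← rpow_neg hd.le, mul_div_assoc', mul_comm,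
    mul_div_assoc, ← rpow_sub hd, show -(1 - α) - α = -1 by ring, rpow_neg_one, div_eq_mul_inv]

lemma two_le_one_add_rpow_add_one_sub_rpow {p t : ℝ} (hp : p ≤ 0) (ht : t ∈ Ioo (-1) 1) :
    2 ≤ (1 + t) ^ p + (1 - t) ^ p := by
  obtain ⟨ht₁, ht₂⟩ := ht
  have hpos : 0 < 1 + t := by linarith
  have hneg : 0 < 1 - t := by linarith
  set u := (1 + t) ^ (p / 2)
  set v := (1 - t) ^ (p / 2)
  have hu : u * u = (1 + t) ^ p := by rw [← rpow_add hpos]; ring_nf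
  have hv : v * v = (1 - t) ^ p := by rw [← rpow_add hneg]; ring_nf
  have huv : 1 ≤ u * v := by
    rw [← mul_rpow hpos.le hneg.le]
    exact one_le_rpow_of_pos_of_le_one_of_nonpos (by nlinarith) (by nlinarith [sq_nonneg t])
      (by linarith)
  nlinarith [sq_nonneg (u - v)]

lemma concaveOn_one_add_rpow_add_one_sub_rpow_add_sq {α : ℝ} (hα : α ∈ Icc 0 1) :
    ConcaveOn ℝ (Icc (-1) 1)
      fun t : ℝ ↦ (1 + t) ^ α + (1 - t) ^ α + α * (1 - α) * t ^ 2 := by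
  obtain ⟨hα₀, hα₁⟩ := hα
  refine concaveOn_of_hasDerivWithinAt2_nonpos (convex_Icc _ _)
    (f' := fun t ↦ α * (1 + t) ^ (α - 1) - α * (1 - t) ^ (α - 1) + α * (1 - α) * (2 * t))
    (f'' := fun t ↦ α * (α - 1) * ((1 + t) ^ (α - 2) + (1 - t) ^ (α - 2)) + α * (1 - α) * 2)
    ?_ ?_ ?_ ?_
  · refine ContinuousOn.add (ContinuousOn.add ?_ ?_) (by fun_prop) <;>
      exact ContinuousOn.rpow_const (by fun_prop) fun _ _ ↦ Or.inr hα₀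
  all_goals
    rw [interior_Icc]
    rintro t ⟨ht₁, ht₂⟩
  · have hpos : 1 + t ≠ 0 := by linarith
    have hneg : 1 - t ≠ 0 := by linarith
    have h₁ := ((hasDerivAt_id t).const_add 1).rpow_const (p := α) (.inl hpos)
    have h₂ := ((hasDerivAt_id t).const_sub 1).rpow_const (p := α) (.inl hneg)
    have h₃ := (hasDerivAt_pow 2 t).const_mul (α * (1 - α))
    refine (((h₁.add h₂).add h₃).congr_deriv ?_).hasDerivWithinAt
    simp only [one_mul, id_eq, neg_mul, Nat.cast_ofNat, Nat.add_one_sub_one, pow_one]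
    ring
  · have hpos : 1 + t ≠ 0 := by linarith
    have hneg : 1 - t ≠ 0 := by linarith
    have h₁ := ((hasDerivAt_id t).const_add 1).rpow_const (p := α - 1) (.inl hpos)
    have h₂ := ((hasDerivAt_id t).const_sub 1).rpow_const (p := α - 1) (.inl hneg)
    have h₃ := ((hasDerivAt_id t).const_mul 2).const_mul (α * (1 - α))
    refine ((((h₁.const_mul α).sub (h₂.const_mul α)).add h₃).congr_deriv ?_).hasDerivWithinAt
    simp only [one_mul, id_eq, neg_mul, neg_sub, mul_one]
    ring_nf
  · have := two_le_one_add_rpow_add_one_sub_rpow (p := α - 2) (by linarith) ⟨ht₁, ht₂⟩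
    nlinarith [mul_nonneg hα₀ (sub_nonneg.2 hα₁)]

lemma one_add_rpow_add_one_sub_rpow_le {α x : ℝ} (hα : α ∈ Icc 0 1) (hx : x ∈ Icc (-1) 1) :
    (1 + x) ^ α + (1 - x) ^ α ≤ 2 - α * (1 - α) * x ^ 2 := by
  have hneg : -x ∈ Icc (-1 : ℝ) 1 := ⟨by linarith [hx.2], by linarith [hx.1]⟩
  have := (concaveOn_one_add_rpow_add_one_sub_rpow_add_sq hα).2 hx hneg
    (by norm_num : (0 : ℝ) ≤ 1 / 2) (by norm_num : (0 : ℝ) ≤ 1 / 2) (by norm_num)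
  norm_num [← sub_eq_add_neg] at this
  linarith

/-- Let `σ = I/d` be the maximally mixed state and `ρ` a diagonal density matrix with
`d/2` diagonal entries equal to `(1-2ε)/d` and `d/2` equal to `(1+2ε)/d`. Then
`tr(ρ^α σ^{1-α}) = ((1+2ε)^α + (1-2ε)^α)/2 ≤ 1 - 2α(1-α)ε²`. -/
theorem trace_pow_mixed_eq_and_le {d : ℕ} (hd : 0 < d) (hdeven : Even d)
    (α ε : ℝ) (hα : α ∈ Set.Ioo (0 : ℝ) 1) (hε : ε ∈ Set.Ioc (0 : ℝ) (1 / 2))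
    (f : Fin d → ℝ)
    (hf : (Finset.univ.val.map f)
        = Multiset.replicate (d / 2) ((1 - 2 * ε) / d)
          + Multiset.replicate (d / 2) ((1 + 2 * ε) / d))
    (ρ : Matrix (Fin d) (Fin d) ℂ) (hρ : ρ = Matrix.diagonal (fun i => ((f i : ℝ) : ℂ)))
    (σ : Matrix (Fin d) (Fin d) ℂ) (hσ : σ = ((d : ℂ))⁻¹ • (1 : Matrix (Fin d) (Fin d) ℂ)) :
    ((matPow ρ α * matPow σ (1 - α)).trace).re
        = ((1 + 2 * ε) ^ α + (1 - 2 * ε) ^ α) / 2 ∧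
      ((1 + 2 * ε) ^ α + (1 - 2 * ε) ^ α) / 2 ≤ 1 - 2 * α * (1 - α) * ε ^ 2 := by
  obtain ⟨hε₀, hε₁⟩ := hε
  have key := one_add_rpow_add_one_sub_rpow_le (x := 2 * ε) (Ioo_subset_Icc_self hα)
    ⟨by linarith, by linarith⟩
  refine ⟨?_, by nlinarith⟩
  have hd₀ : (0 : ℝ) < d := by exact_mod_cast hd
  have hσ' : σ = (((d : ℝ)⁻¹ : ℝ) : ℂ) • 1 := by rw [hσ]; push_cast; rfl
  have hpow (x : ℝ) : (if x = 0 then 0 else x ^ α) = x ^ α := by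
    split_ifs with h
    · rw [h, zero_rpow hα.1.ne']
    · rfl
  rw [hρ, hσ', matPow_ofReal_smul_one (inv_ne_zero hd₀.ne'), Matrix.mul_smul, mul_one, trace_smul,
    trace_matPow_diagonal, hf, smul_eq_mul, ← Complex.ofReal_mul, Complex.ofReal_re]
  simp only [Multiset.map_add, Multiset.map_replicate, Multiset.sum_add, Multiset.sum_replicate,
    nsmul_eq_mul]
  rw [hpow, hpow, mul_add, mul_left_comm, mul_left_comm _ ((d / 2 : ℕ) : ℝ),
    inv_rpow_one_sub_mul_div_rpow (by linarith) hd₀, inv_rpow_one_sub_mul_div_rpow (by linarith) hd₀]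
  obtain ⟨k, rfl⟩ := hdeven
  rw [show (k + k) / 2 = k by omega]
  push_cast at hd₀ ⊢
  have hk : (k : ℝ) ≠ 0 := (by linarith : (0 : ℝ) < k).ne'
  field_simp
  ring
end

section
/- Let α ∈ (0,1) and let ρ, σ be density matrices of the same size. Then the α-affinity satisfies 0 ≤ tr(ρ^α σ^{1−α}) ≤ 1, and tr(ρ^α σ^{1−α}) = 1 if and only if ρ = σ. -/
/-!
Diagonalize `ρ = U diag(a) U*` and `σ = V diag(b) V*` and put `W = U* V`. Then
`tr(ρ^α σ^{1-α}) = ∑ i k, a_i^α b_k^{1-α} |W_ik|²`, and `(|W_ik|²)` is doubly stochastic because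
`W` is unitary. Weighted AM-GM bounds each term by `(α a_i + (1-α) b_k) |W_ik|²`, and these sum to
`α tr ρ + (1-α) tr σ = 1`. Equality holds iff `a_i = b_k` whenever `W_ik ≠ 0`, i.e. iff
`diag(a) W = W diag(b)`, which is `ρ = σ`.
-/

open Matrix
open scoped ComplexOrder

namespace Real

variable {n : Type*} [Fintype n] [DecidableEq n] {α : ℝ} {a b : n → ℝ} {M : Matrix n n ℝ}

theorem sum_sum_mul_mul_eq_of_mem_doublyStochastic (hM : M ∈ doublyStochastic ℝ n) :
    ∑ i, ∑ k, (α * a i + (1 - α) * b k) * M i k = α * ∑ i, a i + (1 - α) * ∑ k, b k := by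
  simp only [add_mul, Finset.sum_add_distrib, mul_assoc, ← Finset.mul_sum]
  rw [Finset.sum_comm (f := fun i k => b k * M i k)]
  simp only [← Finset.mul_sum, sum_row_of_mem_doublyStochastic hM,
    sum_col_of_mem_doublyStochastic hM, mul_one]

theorem sum_sum_rpow_mul_rpow_mul_le_of_mem_doublyStochastic (hα₀ : 0 ≤ α) (hα₁ : α ≤ 1)
    (ha : ∀ i, 0 ≤ a i) (hb : ∀ k, 0 ≤ b k) (hM : M ∈ doublyStochastic ℝ n) :
    ∑ i, ∑ k, a i ^ α * b k ^ (1 - α) * M i k ≤ α * ∑ i, a i + (1 - α) * ∑ k, b k := by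
  rw [← sum_sum_mul_mul_eq_of_mem_doublyStochastic hM]
  gcongr with i _ k _
  · exact nonneg_of_mem_doublyStochastic hM
  · exact geom_mean_le_arith_mean2_weighted hα₀ (by linarith) (ha i) (hb k) (by ring)

theorem sum_sum_rpow_mul_rpow_mul_eq_iff_of_mem_doublyStochastic (hα₀ : 0 < α) (hα₁ : α < 1)
    (ha : ∀ i, 0 ≤ a i) (hb : ∀ k, 0 ≤ b k) (hM : M ∈ doublyStochastic ℝ n) :
    ∑ i, ∑ k, a i ^ α * b k ^ (1 - α) * M i k = α * ∑ i, a i + (1 - α) * ∑ k, b k ↔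
      ∀ i k, M i k ≠ 0 → a i = b k := by
  have hterm : ∀ i k, a i ^ α * b k ^ (1 - α) * M i k ≤ (α * a i + (1 - α) * b k) * M i k :=
    fun i k => mul_le_mul_of_nonneg_right
      (geom_mean_le_arith_mean2_weighted hα₀.le (by linarith) (ha i) (hb k) (by ring))
      (nonneg_of_mem_doublyStochastic hM)
  rw [← sum_sum_mul_mul_eq_of_mem_doublyStochastic hM,
    Finset.sum_eq_sum_iff_of_le fun i _ => Finset.sum_le_sum fun k _ => hterm i k]
  simp only [Finset.mem_univ, forall_const]
  refine forall_congr' fun i => ?_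
  simp only [Finset.sum_eq_sum_iff_of_le fun k _ => hterm i k, Finset.mem_univ, forall_const]
  refine forall_congr' fun k => ?_
  rw [mul_eq_mul_right_iff, or_iff_not_imp_right,
    geom_mean_eq_arith_mean2_weighted_iff_of_pos hα₀ (by linarith) (ha i) (hb k) (by ring)]

end Real

namespace Matrix

variable {n : Type*} [Fintype n] [DecidableEq n]

theorem map_normSq_mem_doublyStochastic {W : Matrix n n ℂ} (hW : W ∈ unitaryGroup n ℂ) :
    W.map Complex.normSq ∈ doublyStochastic ℝ n := by
  have hrow (W : Matrix n n ℂ) (hW : W * star W = 1) (i : n) : ∑ k, Complex.normSq (W i k) = 1 := by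
    have h := congrFun (congrFun hW i) i
    simp only [mul_apply, star_apply, one_apply_eq, Complex.star_def, Complex.mul_conj] at h
    exact_mod_cast h
  refine mem_doublyStochastic_iff_sum.2 ⟨fun i k => Complex.normSq_nonneg _,
    hrow W (mem_unitaryGroup_iff.1 hW), fun k => ?_⟩
  simpa [Complex.normSq_conj] using hrow (star W) (by simpa using mem_unitaryGroup_iff'.1 hW) k

theorem diagonal_mul_eq_mul_diagonal_iff {R : Type*} [CommRing R] [NoZeroDivisors R]
    {d e : n → R} {M : Matrix n n R} :
    diagonal d * M = M * diagonal e ↔ ∀ i k, M i k ≠ 0 → d i = e k := by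
  simp only [← Matrix.ext_iff, diagonal_mul, mul_diagonal, mul_comm (d _), mul_eq_mul_left_iff,
    or_iff_not_imp_right]

theorem conj_eq_conj_iff {R : Type*} [CommRing R] [StarRing R] {U V : Matrix n n R}
    (hU : U ∈ unitaryGroup n R) (hV : V ∈ unitaryGroup n R) {D E : Matrix n n R} :
    U * D * star U = V * E * star V ↔ D * (star U * V) = star U * V * E := by
  have hUU : star U * U = 1 := mem_unitaryGroup_iff'.1 hU
  have hUU' : U * star U = 1 := mem_unitaryGroup_iff.1 hU
  have hVV : star V * V = 1 := mem_unitaryGroup_iff'.1 hV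
  have hVV' : V * star V = 1 := mem_unitaryGroup_iff.1 hV
  constructor
  · intro h
    calc D * (star U * V) = star U * U * D * (star U * V) := by rw [hUU, Matrix.one_mul]
      _ = star U * (U * D * star U) * V := by simp only [Matrix.mul_assoc]
      _ = star U * (V * E * star V) * V := by rw [h]
      _ = star U * V * E * (star V * V) := by simp only [Matrix.mul_assoc]
      _ = star U * V * E := by rw [hVV, Matrix.mul_one]
  · intro h
    calc U * D * star U = U * D * star U * (V * star V) := by rw [hVV', Matrix.mul_one]
      _ = U * (D * (star U * V)) * star V := by simp only [Matrix.mul_assoc]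
      _ = U * (star U * V * E) * star V := by rw [h]
      _ = U * star U * (V * E * star V) := by simp only [Matrix.mul_assoc]
      _ = V * E * star V := by rw [hUU', Matrix.one_mul]

theorem trace_diagonal_mul_mul_diagonal_mul_star (d e : n → ℝ) (W : Matrix n n ℂ) :
    (diagonal (fun i => (d i : ℂ)) * W * diagonal (fun k => (e k : ℂ)) * star W).trace =
      ((∑ i, ∑ k, d i * e k * Complex.normSq (W i k) : ℝ) : ℂ) := by
  simp only [trace, diag_apply, mul_apply, diagonal_apply, ite_mul, zero_mul, Finset.sum_ite_eq,
    Finset.mem_univ, ↓reduceIte, mul_ite, mul_zero, Finset.sum_ite_eq', star_apply,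
    RCLike.star_def, Complex.ofReal_sum, Complex.ofReal_mul, ← Complex.mul_conj]
  refine Finset.sum_congr rfl fun i _ => Finset.sum_congr rfl fun k _ => ?_
  ring

namespace IsHermitian

variable {A B : Matrix n n ℂ}

theorem eq_mul_diagonal_mul_star (hA : A.IsHermitian) :
    A = (hA.eigenvectorUnitary : Matrix n n ℂ) * diagonal (fun i => (hA.eigenvalues i : ℂ)) *
      star (hA.eigenvectorUnitary : Matrix n n ℂ) :=
  hA.spectral_theorem

theorem cfc_eq_mul_diagonal_mul_star (hA : A.IsHermitian) (f : ℝ → ℝ) :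
    hA.cfc f = (hA.eigenvectorUnitary : Matrix n n ℂ) *
      diagonal (fun i => (f (hA.eigenvalues i) : ℂ)) *
      star (hA.eigenvectorUnitary : Matrix n n ℂ) :=
  rfl

noncomputable def eigenvectorOverlap (hA : A.IsHermitian) (hB : B.IsHermitian) : Matrix n n ℂ :=
  star (hA.eigenvectorUnitary : Matrix n n ℂ) * hB.eigenvectorUnitary

theorem sum_eigenvalues_eq_one (hA : A.IsHermitian) (h : A.trace = 1) :
    ∑ i, hA.eigenvalues i = 1 := by
  rw [← RCLike.ofReal_inj (K := ℂ), RCLike.ofReal_sum, RCLike.ofReal_one,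
    ← hA.trace_eq_sum_eigenvalues, h]

theorem eigenvectorOverlap_mem_unitaryGroup (hA : A.IsHermitian) (hB : B.IsHermitian) :
    hA.eigenvectorOverlap hB ∈ unitaryGroup n ℂ :=
  Submonoid.mul_mem _ (Unitary.star_mem hA.eigenvectorUnitary.2) hB.eigenvectorUnitary.2

theorem trace_cfc_mul_cfc (hA : A.IsHermitian) (hB : B.IsHermitian) (f g : ℝ → ℝ) :
    (hA.cfc f * hB.cfc g).trace = ((∑ i, ∑ k, f (hA.eigenvalues i) * g (hB.eigenvalues k) *
      Complex.normSq (hA.eigenvectorOverlap hB i k) : ℝ) : ℂ) := by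
  rw [← trace_diagonal_mul_mul_diagonal_mul_star, cfc_eq_mul_diagonal_mul_star,
    cfc_eq_mul_diagonal_mul_star, eigenvectorOverlap, star_mul, star_star]
  simp only [Matrix.mul_assoc]
  rw [trace_mul_comm (hA.eigenvectorUnitary : Matrix n n ℂ)]
  simp only [Matrix.mul_assoc]

theorem eq_iff_forall_eigenvectorOverlap_ne_zero (hA : A.IsHermitian) (hB : B.IsHermitian) :
    A = B ↔ ∀ i k, hA.eigenvectorOverlap hB i k ≠ 0 → hA.eigenvalues i = hB.eigenvalues k := by
  conv_lhs => rw [hA.eq_mul_diagonal_mul_star, hB.eq_mul_diagonal_mul_star]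
  rw [conj_eq_conj_iff hA.eigenvectorUnitary.2 hB.eigenvectorUnitary.2,
    diagonal_mul_eq_mul_diagonal_iff]
  simp only [eigenvectorOverlap, Complex.ofReal_inj]

end IsHermitian

end Matrix

theorem matPow_eq_cfc_rpow {n : Type*} [Fintype n] [DecidableEq n] {A : Matrix n n ℂ}
    (hA : A.IsHermitian) {β : ℝ} (hβ : β ≠ 0) : matPow A β = hA.cfc (· ^ β) := by
  rw [matPow, dif_pos hA]
  congr 1 with x
  split_ifs with hx
  · rw [hx, Real.zero_rpow hβ]
  · rfl

/-- The α-affinity `tr(ρ^α σ^{1-α})` of density matrices satisfies `0 ≤ A_α(ρ,σ) ≤ 1`,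
with equality `A_α(ρ,σ) = 1` if and only if `ρ = σ`. -/
theorem affinity_nonneg_le_one_eq_iff {n : Type*} [Fintype n] [DecidableEq n]
    (α : ℝ) (hα : α ∈ Set.Ioo (0 : ℝ) 1)
    (ρ σ : Matrix n n ℂ) (hρ : ρ.PosSemidef) (hρ1 : ρ.trace = 1)
    (hσ : σ.PosSemidef) (hσ1 : σ.trace = 1) :
    0 ≤ ((matPow ρ α * matPow σ (1 - α)).trace).re ∧
      ((matPow ρ α * matPow σ (1 - α)).trace).re ≤ 1 ∧
      (((matPow ρ α * matPow σ (1 - α)).trace).re = 1 ↔ ρ = σ) := by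
  obtain ⟨hα₀, hα₁⟩ := hα
  have hM := map_normSq_mem_doublyStochastic (hρ.1.eigenvectorOverlap_mem_unitaryGroup hσ.1)
  have hsum_ρ := hρ.1.sum_eigenvalues_eq_one hρ1
  have hsum_σ := hσ.1.sum_eigenvalues_eq_one hσ1
  rw [matPow_eq_cfc_rpow hρ.1 hα₀.ne', matPow_eq_cfc_rpow hσ.1 (by linarith),
    IsHermitian.trace_cfc_mul_cfc, Complex.ofReal_re,
    hρ.1.eq_iff_forall_eigenvectorOverlap_ne_zero hσ.1]
  refine ⟨Finset.sum_nonneg fun i _ => Finset.sum_nonneg fun k _ => ?_, ?_, ?_⟩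
  · exact mul_nonneg (mul_nonneg (Real.rpow_nonneg (hρ.eigenvalues_nonneg i) _)
      (Real.rpow_nonneg (hσ.eigenvalues_nonneg k) _)) (Complex.normSq_nonneg _)
  · simpa [hsum_ρ, hsum_σ] using Real.sum_sum_rpow_mul_rpow_mul_le_of_mem_doublyStochastic
      hα₀.le hα₁.le hρ.eigenvalues_nonneg hσ.eigenvalues_nonneg hM
  · simpa [hsum_ρ, hsum_σ] using Real.sum_sum_rpow_mul_rpow_mul_eq_iff_of_mem_doublyStochastic
      hα₀ hα₁ hρ.eigenvalues_nonneg hσ.eigenvalues_nonneg hM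
end
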